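/- arXiv:1805.12361 — 2 statements merged into one kernel-verified Lean document; each statement's English description precedes it below -/
import Mathlib

section
/- Let Q(R) = A·R^k·a^R + Q₀ with A > 0, a ≥ e, k ≥ 1, Q₀ ≥ 0, with first and second derivatives Q'(R) > 0 and Q''(R) > 0. Then for every R > 0, (1/Q'(R))² < Q''(R)/(Q'(R))³. Equivalently, the inverse g of Q satisfies at each point y ∈ (Q₀, ∞), where g'(y) = 1/Q'(g(y)) and g''(y) = −Q''(g(y))/(Q'(g(y)))³, the strict inequality (g'(y))² < −g''(y), i.e., (g'(y))² < |g''(y)|. -/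
/-- First derivative of the transmit-power function:
Q'(R) = A·(k·R^{k−1}·a^R + R^k·a^R·ln a). -/
noncomputable def Qfun' (A a k : ℝ) : ℝ → ℝ :=
  fun R => A * (k * R ^ (k - 1) * a ^ R + R ^ k * a ^ R * Real.log a)

/-- Second derivative of the transmit-power function:
Q''(R) = A·(k(k−1)·R^{k−2}·a^R + 2k·R^{k−1}·a^R·ln a + R^k·a^R·(ln a)²). -/
noncomputable def Qfun'' (A a k : ℝ) : ℝ → ℝ :=
  fun R => A * (k * (k - 1) * R ^ (k - 2) * a ^ R + 2 * k * R ^ (k - 1) * a ^ R * Real.log a +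
    R ^ k * a ^ R * (Real.log a) ^ 2)

lemma Q_lt (A a k : ℝ) (hA : 0 < A) (ha : Real.exp 1 ≤ a) (hk : 1 ≤ k) :
    ∀ R : ℝ, 0 < R → Qfun' A a k R < Qfun'' A a k R := by
  intro R hR
  have ha0 : (0:ℝ) < a := lt_of_lt_of_le (Real.exp_pos 1) ha
  have hL : 1 ≤ Real.log a := by
    have := Real.log_le_log (Real.exp_pos 1) ha
    simpa [Real.log_exp] using this
  have hw : 0 < a ^ R := Real.rpow_pos_of_pos ha0 R
  have h2 : 0 < R ^ (k - 2) := Real.rpow_pos_of_pos hR _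
  have h1 : 0 < R ^ (k - 1) := Real.rpow_pos_of_pos hR _
  have h0 : 0 < R ^ k := Real.rpow_pos_of_pos hR _
  unfold Qfun' Qfun''
  set L := Real.log a
  have hkk : 0 ≤ k * (k - 1) := mul_nonneg (by linarith) (by linarith)
  nlinarith [mul_pos (mul_pos h1 hw) hA, mul_pos (mul_pos h0 hw) hA,
    mul_nonneg (mul_nonneg (le_of_lt (mul_pos h2 hw)) hkk) hA.le,
    mul_nonneg (mul_nonneg (mul_nonneg (le_of_lt (mul_pos h0 hw)) hA.le) (by linarith : (0:ℝ) ≤ L))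
      (by linarith : (0:ℝ) ≤ L - 1),
    mul_nonneg (mul_nonneg (mul_nonneg (le_of_lt (mul_pos h1 hw)) hA.le) (by linarith : (0:ℝ) ≤ k))
      (by linarith : (0:ℝ) ≤ L - 1)]

/-- with a ≥ e, Q' > 0 and Q'' > 0 on (0, ∞), for every R > 0 one has
(1/Q'(R))² < Q''(R)/(Q'(R))³.  Equivalently, the inverse g of Q, with
g'(y) = 1/Q'(g(y)) and g''(y) = −Q''(g(y))/(Q'(g(y)))³ at each y ∈ (Q₀, ∞), satisfies
(g'(y))² < −g''(y), i.e., (g'(y))² < |g''(y)|. -/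
theorem stmt_7 (A a k Q₀ : ℝ) (hA : 0 < A) (ha : Real.exp 1 ≤ a) (hk : 1 ≤ k) (hQ₀ : 0 ≤ Q₀)
    (hQ' : ∀ R : ℝ, 0 < R → 0 < Qfun' A a k R)
    (hQ'' : ∀ R : ℝ, 0 < R → 0 < Qfun'' A a k R)
    (g g' g'' : ℝ → ℝ)
    (hgpos : ∀ y : ℝ, Q₀ < y → 0 < g y)
    (hg' : ∀ y : ℝ, Q₀ < y → g' y = 1 / Qfun' A a k (g y))
    (hg'' : ∀ y : ℝ, Q₀ < y → g'' y = -(Qfun'' A a k (g y)) / (Qfun' A a k (g y)) ^ 3) :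
    (∀ R : ℝ, 0 < R → (1 / Qfun' A a k R) ^ 2 < Qfun'' A a k R / (Qfun' A a k R) ^ 3) ∧
    (∀ y : ℝ, Q₀ < y → (g' y) ^ 2 < -(g'' y) ∧ (g' y) ^ 2 < |g'' y|) := by
  have main : ∀ R : ℝ, 0 < R →
      (1 / Qfun' A a k R) ^ 2 < Qfun'' A a k R / (Qfun' A a k R) ^ 3 := by
    intro R hR
    have hP := hQ' R hR
    have hlt := Q_lt A a k hA ha hk R hR
    have he : (1 / Qfun' A a k R) ^ 2 = Qfun' A a k R / (Qfun' A a k R) ^ 3 := by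
      field_simp
    rw [he, div_lt_div_iff₀ (pow_pos hP 3) (pow_pos hP 3)]
    exact mul_lt_mul_of_pos_right hlt (pow_pos hP 3)
  refine ⟨main, fun y hy => ?_⟩
  have hgy := hgpos y hy
  have h1 : (g' y) ^ 2 < -(g'' y) := by
    rw [hg' y hy, hg'' y hy, neg_div, neg_neg]
    exact main _ hgy
  have hneg : g'' y < 0 := by
    have h2 : (0:ℝ) ≤ (g' y) ^ 2 := sq_nonneg _
    linarith
  exact ⟨h1, by rwa [abs_of_neg hneg]⟩
end

section
/- (Proposition 2, best response of an anchor node) Under the hypotheses making the anchor utility U_F strictly concave on the open interval I (a ≥ e, g > 2 on I, w₁, w₂ ∈ (0,1) with w₁ + w₂ = 1, E_tl, C, n, d, n_arx, S, P_sum > 0), suppose q* ∈ I is a critical point of U_F, i.e., U_F'(q*) = 0, and let g'(q*) > 0 be the derivative of g at q*. Then q* is the unique global maximizer of U_F on I, and it satisfies (q*)² · ( w₁·C − Z·g(q*)²·g'(q*) ) = w₂·E_tl·P_sum, where Z = (4·w₂·π·n·E_tl/d³)·(1/n_arx + 1/S). -/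
/-!
With g' = 1 / Q'(g), the derivative of the utility is
U_F'(q) = -w₁C/E_tl + w₂ (3K g(q)² / Q'(g(q)) + P_sum / q²), K = (4πn / (3d³)) (1/n_arx + 1/S).
Since Q'(R) = A a^R R^(k-1) (k + R log a), the quotient R² / Q'(R) = R^(3-k) a^(-R) / (A (k + R log a))
is strictly decreasing for R ≥ 2 as soon as log a ≥ 1 and k ≥ 1. As g is increasing with g > 2 on I,
U_F' is strictly decreasing on I, so by the mean value theorem U_F increases up to its critical
point q* and decreases after it. The stationarity equation is U_F'(q*) = 0 with denominators cleared.
-/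

/-- The underwater acoustic transmit-power function Q(R) = A·R^k·a^R + Q₀. -/
noncomputable def Qfun (A a k Q₀ : ℝ) : ℝ → ℝ := fun R => A * R ^ k * a ^ R + Q₀

/-- The follower (anchor node) utility (Eq. (10)):
U_F(q) = w₁·(E_tl − C·q)/E_tl + w₂·( (4π·n/(3d³))·(1/n_arx + 1/S)·g(q)³ − P_sum/q ). -/
noncomputable def UF (w₁ w₂ Etl C n d narx S Psum : ℝ) (g : ℝ → ℝ) : ℝ → ℝ :=
  fun q => w₁ * (Etl - C * q) / Etl +
    w₂ * ((4 * Real.pi * n / (3 * d ^ 3)) * (1 / narx + 1 / S) * (g q) ^ 3 - Psum / q)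

open Set Real

noncomputable def Qderiv (A a k : ℝ) (R : ℝ) : ℝ := A * (R ^ (k - 1) * a ^ R) * (k + log a * R)

lemma hasDerivAt_Qfun {A a k R : ℝ} (Q₀ : ℝ) (ha : 0 < a) (hR : 0 < R) :
    HasDerivAt (Qfun A a k Q₀) (Qderiv A a k R) R := by
  have hpow : HasDerivAt (fun x : ℝ => x ^ k) (k * R ^ (k - 1)) R :=
    hasDerivAt_rpow_const (Or.inl hR.ne')
  have hexp : HasDerivAt (fun x : ℝ => a ^ x) (a ^ R * log a) R :=
    (hasStrictDerivAt_const_rpow ha R).hasDerivAt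
  refine (((hpow.const_mul A).mul hexp).add_const Q₀).congr_deriv ?_
  rw [Qderiv, rpow_sub_one hR.ne']
  field_simp

lemma Qderiv_pos {A a k R : ℝ} (hA : 0 < A) (ha : 1 ≤ a) (hk : 0 < k) (hR : 0 < R) :
    0 < Qderiv A a k R := by
  have := log_nonneg ha
  unfold Qderiv
  positivity

lemma one_le_log_of_exp_one_le {a : ℝ} (ha : exp 1 ≤ a) : 1 ≤ log a := by
  simpa using log_le_log (exp_pos 1) ha

lemma sq_mul_rpow_mul_rpow_le {a k x y : ℝ} (ha : exp 1 ≤ a) (hk : 1 ≤ k) (hx : 2 ≤ x)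
    (hxy : x ≤ y) : y ^ 2 * (x ^ (k - 1) * a ^ x) ≤ x ^ 2 * (y ^ (k - 1) * a ^ y) := by
  have ha0 : 0 < a := (exp_pos 1).trans_le ha
  have hL := one_le_log_of_exp_one_le ha
  have hx0 : 0 < x := by linarith
  have hy0 : 0 < y := by linarith
  -- In logarithms: (3 - k) log (y / x) ≤ (y - x) log a, as log (y / x) ≤ (y - x) / x ≤ (y - x) / 2.
  rw [← log_le_log_iff (by positivity) (by positivity), log_mul (by positivity) (by positivity), log_mul (by positivity) (by positivity),
    log_mul (by positivity) (by positivity), log_mul (by positivity) (by positivity),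
    log_pow, log_pow, log_rpow hx0, log_rpow hy0, log_rpow ha0, log_rpow ha0]
  have hD : 0 ≤ log y - log x := sub_nonneg.mpr (log_le_log hx0 hxy)
  have hDle : x * (log y - log x) ≤ y - x := by
    have := log_le_sub_one_of_pos (div_pos hy0 hx0)
    rw [log_div hy0.ne' hx0.ne'] at this
    calc x * (log y - log x) ≤ x * (y / x - 1) := by gcongr
      _ = y - x := by field_simp
  push_cast
  nlinarith [mul_nonneg (sub_nonneg.mpr hk) hD, mul_nonneg (sub_nonneg.mpr hx) hD,
    mul_nonneg (sub_nonneg.mpr hL) (sub_nonneg.mpr hxy)]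

lemma sq_div_Qderiv_strictAntiOn {A a k : ℝ} (hA : 0 < A) (ha : exp 1 ≤ a) (hk : 1 ≤ k) :
    StrictAntiOn (fun R => R ^ 2 / Qderiv A a k R) (Ici 2) := by
  intro x (hx : 2 ≤ x) y (hy : 2 ≤ y) hxy
  have ha1 : 1 ≤ a := (one_le_exp zero_le_one).trans ha
  have hk0 : 0 < k := by linarith
  have hx0 : 0 < x := by linarith
  have hL : 0 < log a := by linarith [one_le_log_of_exp_one_le ha]
  rw [div_lt_div_iff₀ (Qderiv_pos hA ha1 hk0 (by linarith)) (Qderiv_pos hA ha1 hk0 hx0)]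
  unfold Qderiv
  calc y ^ 2 * (A * (x ^ (k - 1) * a ^ x) * (k + log a * x))
      = A * (y ^ 2 * (x ^ (k - 1) * a ^ x)) * (k + log a * x) := by ring
    _ ≤ A * (x ^ 2 * (y ^ (k - 1) * a ^ y)) * (k + log a * x) := by
      have := sq_mul_rpow_mul_rpow_le ha hk hx hxy.le
      have : 0 < k + log a * x := by positivity
      gcongr
    _ < A * (x ^ 2 * (y ^ (k - 1) * a ^ y)) * (k + log a * y) := by
      have : 0 < a := by linarith
      gcongr
    _ = x ^ 2 * (A * (y ^ (k - 1) * a ^ y) * (k + log a * y)) := by ring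

lemma hasDerivAt_inverse_Qfun {A a k Q₀ : ℝ} (hA : 0 < A) (ha : 1 ≤ a) (hk : 0 < k)
    {g : ℝ → ℝ} (hginv : ∀ R : ℝ, 0 < R → g (Qfun A a k Q₀ R) = R)
    (hgQ : ∀ y : ℝ, Q₀ < y → Qfun A a k Q₀ (g y) = y) (hgmono : StrictMonoOn g (Ioi Q₀))
    (hgpos : ∀ y : ℝ, Q₀ < y → 0 < g y) {y : ℝ} (hy : Q₀ < y) :
    HasDerivAt g (Qderiv A a k (g y))⁻¹ y := by
  have ha0 : 0 < a := by linarith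
  have himage : Ioi 0 ⊆ g '' Ioi Q₀ := fun R (hR : 0 < R) =>
    ⟨Qfun A a k Q₀ R, lt_add_of_pos_left Q₀ (by positivity), hginv R hR⟩
  have hcont : ContinuousAt g y := hgmono.continuousAt_of_image_mem_nhds (Ioi_mem_nhds hy)
    (Filter.mem_of_superset (Ioi_mem_nhds (hgpos y hy)) himage)
  exact .of_local_left_inverse hcont (hasDerivAt_Qfun Q₀ ha0 (hgpos y hy))
    (Qderiv_pos hA ha hk (hgpos y hy)).ne' (Filter.mem_of_superset (Ioi_mem_nhds hy) hgQ)

lemma hasDerivAt_UF (w₁ w₂ Etl C n d narx S Psum : ℝ) {g : ℝ → ℝ} {g' q : ℝ} (hq : q ≠ 0)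
    (hg : HasDerivAt g g' q) :
    HasDerivAt (UF w₁ w₂ Etl C n d narx S Psum g)
      (-(w₁ * C) / Etl + w₂ * ((4 * π * n / (3 * d ^ 3)) * (1 / narx + 1 / S)
        * (3 * (g q ^ 2 * g')) + Psum / q ^ 2)) q := by
  have hlin : HasDerivAt (fun x : ℝ => w₁ * (Etl - C * x) / Etl) (w₁ * (0 - C * 1) / Etl) q :=
    (((hasDerivAt_const q Etl).sub ((hasDerivAt_id q).const_mul C)).const_mul w₁).div_const Etl
  have hrecip : HasDerivAt (fun x : ℝ => Psum / x) (Psum * -(q ^ 2)⁻¹) q := by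
    simpa only [div_eq_mul_inv] using (hasDerivAt_inv hq).const_mul Psum
  refine (hlin.add (((hg.pow 3).const_mul _).sub hrecip |>.const_mul w₂)).congr_deriv ?_
  push_cast
  ring

lemma apply_lt_of_strictAntiOn_deriv {f f' : ℝ → ℝ} {I : Set ℝ} (hI : I.OrdConnected)
    (hf : ∀ x ∈ I, HasDerivAt f (f' x) x) (hf' : StrictAntiOn f' I) {x₀ : ℝ} (hx₀ : x₀ ∈ I)
    (hcrit : f' x₀ = 0) {x : ℝ} (hx : x ∈ I) (hne : x ≠ x₀) : f x < f x₀ := by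
  have slope : ∀ {u v : ℝ}, u ∈ I → v ∈ I → u < v →
      ∃ c ∈ I, u < c ∧ c < v ∧ f v - f u = f' c * (v - u) := by
    intro u v hu hv huv
    obtain ⟨c, hc, hslope⟩ := exists_hasDerivAt_eq_slope f f' huv
      (fun z hz => (hf z (hI.out hu hv hz)).continuousAt.continuousWithinAt)
      (fun z hz => hf z (hI.out hu hv (Ioo_subset_Icc_self hz)))
    refine ⟨c, hI.out hu hv (Ioo_subset_Icc_self hc), hc.1, hc.2, ?_⟩
    rw [hslope]
    field_simp [(sub_pos.mpr huv).ne']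
  rcases hne.lt_or_gt with hlt | hgt
  · obtain ⟨c, hcI, -, hcx₀, hslope⟩ := slope hx hx₀ hlt
    have : 0 < f' c := hcrit ▸ hf' hcI hx₀ hcx₀
    nlinarith
  · obtain ⟨c, hcI, hx₀c, -, hslope⟩ := slope hx₀ hx hgt
    have : f' c < 0 := hcrit ▸ hf' hx₀ hcI hx₀c
    nlinarith

theorem stmt_10_general (A a k Q₀ : ℝ) (hA : 0 < A) (ha : Real.exp 1 ≤ a) (hk : 1 ≤ k) (hQ₀ : 0 ≤ Q₀)
    (g : ℝ → ℝ)
    (hginv : ∀ R : ℝ, 0 < R → g (Qfun A a k Q₀ R) = R)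
    (hgQ : ∀ y : ℝ, Q₀ < y → Qfun A a k Q₀ (g y) = y)
    (hgmono : StrictMonoOn g (Set.Ioi Q₀))
    (hgpos : ∀ y : ℝ, Q₀ < y → 0 < g y)
    (I : Set ℝ) (hIsub : I ⊆ Set.Ioi Q₀) (hIconv : Convex ℝ I)
    (hg2 : ∀ q ∈ I, 2 < g q)
    (w₁ w₂ : ℝ) (hw₂ : w₂ ∈ Set.Ioo (0 : ℝ) 1)
    (Etl C n d narx S Psum : ℝ) (hEtl : 0 < Etl) (hn : 0 < n) (hd : 0 < d)
    (hnarx : 0 < narx) (hS : 0 < S) (hPsum : 0 < Psum)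
    (qstar : ℝ) (hqI : qstar ∈ I)
    (hcrit : deriv (UF w₁ w₂ Etl C n d narx S Psum g) qstar = 0)
    (g' : ℝ) (hgd : HasDerivAt g g' qstar) :
    (∀ q ∈ I, q ≠ qstar →
      UF w₁ w₂ Etl C n d narx S Psum g q < UF w₁ w₂ Etl C n d narx S Psum g qstar) ∧
    qstar ^ 2 * (w₁ * C -
        (4 * w₂ * Real.pi * n * Etl / d ^ 3) * (1 / narx + 1 / S) * (g qstar) ^ 2 * g') =
      w₂ * Etl * Psum := by
  have hpos : ∀ q ∈ I, 0 < q := fun q hq => hQ₀.trans_lt (hIsub hq)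
  set K := 4 * π * n / (3 * d ^ 3) * (1 / narx + 1 / S)
  set U' : ℝ → ℝ := fun q => -(w₁ * C) / Etl +
    w₂ * (K * (3 * (g q ^ 2 * (Qderiv A a k (g q))⁻¹)) + Psum / q ^ 2)
  have hU : ∀ q ∈ I, HasDerivAt (UF w₁ w₂ Etl C n d narx S Psum g) (U' q) q :=
    fun q hq => hasDerivAt_UF _ _ _ _ _ _ _ _ _ (hpos q hq).ne' <|
      hasDerivAt_inverse_Qfun hA ((one_le_exp zero_le_one).trans ha) (by linarith)
        hginv hgQ hgmono hgpos (hIsub hq)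
  have hU'anti : StrictAntiOn U' I := by
    intro x hx y hy hxy
    have hgsq := sq_div_Qderiv_strictAntiOn hA ha hk (hg2 x hx).le (hg2 y hy).le
      (hgmono (hIsub hx) (hIsub hy) hxy)
    have hx0 := hpos x hx
    simp only [U', ← div_eq_mul_inv] at hgsq ⊢
    have : 0 < K := by positivity
    have : 0 < w₂ := hw₂.1
    gcongr
  refine ⟨fun q hq hne => apply_lt_of_strictAntiOn_deriv hIconv.ordConnected hU hU'anti hqI
    ((hU qstar hqI).deriv.symm.trans hcrit) hq hne, ?_⟩
  have hq0 := (hpos qstar hqI).ne'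
  have hstat := (hasDerivAt_UF w₁ w₂ Etl C n d narx S Psum hq0 hgd).deriv
  rw [hcrit] at hstat
  field_simp at hstat ⊢
  linarith

/-- Proposition 2, best response of an anchor node: a critical point q* ∈ I
of U_F is the unique global maximizer of U_F on I, and it satisfies
(q*)²·(w₁·C − Z·g(q*)²·g'(q*)) = w₂·E_tl·P_sum, with
Z = (4·w₂·π·n·E_tl/d³)·(1/n_arx + 1/S). -/
theorem stmt_10 (A a k Q₀ : ℝ) (hA : 0 < A) (ha : Real.exp 1 ≤ a) (hk : 1 ≤ k) (hQ₀ : 0 ≤ Q₀)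
    (g : ℝ → ℝ)
    (hginv : ∀ R : ℝ, 0 < R → g (Qfun A a k Q₀ R) = R)
    (hgQ : ∀ y : ℝ, Q₀ < y → Qfun A a k Q₀ (g y) = y)
    (hgmono : StrictMonoOn g (Set.Ioi Q₀))
    (hgpos : ∀ y : ℝ, Q₀ < y → 0 < g y)
    (I : Set ℝ) (hIsub : I ⊆ Set.Ioi Q₀) (hIopen : IsOpen I) (hIconv : Convex ℝ I)
    (hg2 : ∀ q ∈ I, 2 < g q)
    (w₁ w₂ : ℝ) (hw₁ : w₁ ∈ Set.Ioo (0 : ℝ) 1) (hw₂ : w₂ ∈ Set.Ioo (0 : ℝ) 1)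
    (hw : w₁ + w₂ = 1)
    (Etl C n d narx S Psum : ℝ) (hEtl : 0 < Etl) (hC : 0 < C) (hn : 0 < n) (hd : 0 < d)
    (hnarx : 0 < narx) (hS : 0 < S) (hPsum : 0 < Psum)
    (qstar : ℝ) (hqI : qstar ∈ I)
    (hcrit : deriv (UF w₁ w₂ Etl C n d narx S Psum g) qstar = 0)
    (g' : ℝ) (hgd : HasDerivAt g g' qstar) (hg' : 0 < g') :
    (∀ q ∈ I, q ≠ qstar →
      UF w₁ w₂ Etl C n d narx S Psum g q < UF w₁ w₂ Etl C n d narx S Psum g qstar) ∧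
    qstar ^ 2 * (w₁ * C -
        (4 * w₂ * Real.pi * n * Etl / d ^ 3) * (1 / narx + 1 / S) * (g qstar) ^ 2 * g') =
      w₂ * Etl * Psum :=
  stmt_10_general A a k Q₀ hA ha hk hQ₀ g hginv hgQ hgmono hgpos I hIsub hIconv hg2 w₁ w₂ hw₂ Etl C
    n d narx S Psum hEtl hn hd hnarx hS hPsum qstar hqI hcrit g' hgd
end
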